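/- arXiv:2105.05317 — 2 statements merged into one kernel-verified Lean document; each statement's English description precedes it below -/
import Mathlib

section
/- For real y > 0 with y ≠ 1, real k > 1 and T > 0, the truncated Perron integral satisfies |(1/(2πi)) ∫_{k-iT}^{k+iT} (y^s / s) ds − h(y)| ≤ C · y^k / (T · |log y|) for an absolute constant C, where h(y) = 0 for 0 < y < 1 and h(y) = 1 for y > 1. -/
/-!
Write `y = e^l` with `l ≠ 0`, so that `y^(k+it) = y^k e^(ilt)`. One integration by parts gives
`∫_{-T}^{T} e^(ilt)/(k+it) dt = [e^(ilt)/(il(k+it))]_{-T}^{T} + l⁻¹ ∫_{-T}^{T} e^(ilt)/(k+it)² dt`,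
with boundary terms of size at most `1/(|l|T)`. The last integrand is absolutely integrable, its
tails beyond `|t| > T` contribute at most `2/T`, and its integral over `ℝ` is `2π l e^(-kl)` for
`l > 0` and `0` for `l < 0`: this is Fourier inversion, `(k + 2πiw)⁻²` being the Fourier transform
of `u ↦ u₊ e^(-k u₊)`. Since `y^k e^(-kl) = 1`, after the factor `y^k/(2π)` this main term is
exactly `hFun y`.
-/

open Real Filter intervalIntegral

noncomputable def hFun (y : ℝ) : ℂ := if y < 1 then 0 else 1

open MeasureTheory Complex Set
open scoped FourierTransform Topology

lemma tendsto_pow_mul_cexp_neg_mul_atTop {c : ℂ} (hc : 0 < c.re) (n : ℕ) :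
    Tendsto (fun u : ℝ => (u : ℂ) ^ n * cexp (-(c * u))) atTop (𝓝 0) := by
  rw [tendsto_zero_iff_norm_tendsto_zero]
  refine (tendsto_rpow_mul_exp_neg_mul_atTop_nhds_zero n c.re hc).congr' ?_
  filter_upwards [eventually_ge_atTop 0] with u hu
  simp [norm_exp, abs_of_nonneg hu]

lemma integrableOn_Ioi_mul_cexp_neg_mul {c : ℂ} (hc : 0 < c.re) :
    IntegrableOn (fun u : ℝ => (u : ℂ) * cexp (-(c * u))) (Ioi 0) := by
  refine (integrableOn_rpow_mul_exp_neg_mul_rpow (s := 1) (by norm_num) zero_lt_one hc).mono'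
    (by fun_prop) ?_
  filter_upwards [ae_restrict_mem measurableSet_Ioi] with u (hu : 0 < u)
  simp [norm_exp, abs_of_pos hu]

lemma integral_Ioi_mul_cexp_neg_mul {c : ℂ} (hc : 0 < c.re) :
    ∫ u in Ioi (0 : ℝ), (u : ℂ) * cexp (-(c * u)) = 1 / c ^ 2 := by
  have hc0 : c ≠ 0 := fun h => by simp [h] at hc
  set F : ℝ → ℂ := fun u => -((u : ℂ) * c + 1) / c ^ 2 * cexp (-(c * u))
  have hF : ∀ u : ℝ, HasDerivAt F ((u : ℂ) * cexp (-(c * u))) u := by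
    have h (z : ℂ) : HasDerivAt (fun z => -(z * c + 1) / c ^ 2 * cexp (-(c * z)))
        (z * cexp (-(c * z))) z := by
      have h1 : HasDerivAt (fun z : ℂ => -(z * c + 1) / c ^ 2) (-c / c ^ 2) z := by
        simpa using (((hasDerivAt_id z).mul_const c).add_const 1).neg.div_const (c ^ 2)
      have h2 : HasDerivAt (fun z : ℂ => cexp (-(c * z))) (cexp (-(c * z)) * -c) z := by
        simpa using ((hasDerivAt_id z).const_mul c).neg.cexp
      refine (h1.mul h2).congr_deriv ?_
      field_simp
      ring
    exact fun u => (h u).comp_ofReal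
  have hlim : Tendsto F atTop (𝓝 0) := by
    have h := ((tendsto_pow_mul_cexp_neg_mul_atTop hc 1).const_mul (-1 / c)).add
      ((tendsto_pow_mul_cexp_neg_mul_atTop hc 0).const_mul (-1 / c ^ 2))
    simp only [mul_zero, add_zero] at h
    refine h.congr fun u => ?_
    simp only [F, pow_one, pow_zero, one_mul]
    field_simp
    ring
  rw [integral_Ioi_of_hasDerivAt_of_tendsto (hF 0).continuousAt.continuousWithinAt
    (fun u _ => hF u) (integrableOn_Ioi_mul_cexp_neg_mul hc) hlim]
  simp [F]
  ring

section Tail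

variable {E : Type*} [NormedAddCommGroup E] [NormedSpace ℝ E]

lemma norm_setIntegral_Ioi_le_inv {g : ℝ → E} {T : ℝ} (hT : 0 < T)
    (hg : ∀ t, T < t → ‖g t‖ ≤ (t ^ 2)⁻¹) : ‖∫ t in Ioi T, g t‖ ≤ T⁻¹ := by
  have hrpow : ∀ t, T < t → (t ^ 2)⁻¹ = t ^ (-2 : ℝ) := fun t ht => by
    rw [rpow_neg (hT.trans ht).le, rpow_two]
  calc ‖∫ t in Ioi T, g t‖ ≤ ∫ t in Ioi T, t ^ (-2 : ℝ) :=
        norm_integral_le_of_norm_le (integrableOn_Ioi_rpow_of_lt (by norm_num) hT)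
          ((ae_restrict_mem measurableSet_Ioi).mono fun t ht => (hrpow t ht) ▸ hg t ht)
    _ = T⁻¹ := by
        rw [integral_Ioi_rpow_of_lt (by norm_num) hT]
        norm_num [rpow_neg_one]

lemma norm_integral_sub_intervalIntegral_le {g : ℝ → E} (hg : Integrable g) {T : ℝ} (hT : 0 < T)
    (hbound : ∀ t, T < |t| → ‖g t‖ ≤ (t ^ 2)⁻¹) :
    ‖(∫ t, g t) - ∫ t in -T..T, g t‖ ≤ 2 / T := by
  have hsplit : (∫ t, g t) - ∫ t in -T..T, g t
      = (∫ t in Ioi T, g (-t)) + ∫ t in Ioi T, g t := by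
    rw [integral_comp_neg_Ioi, ← integral_Iic_add_Ioi hg.integrableOn hg.integrableOn,
      ← integral_Iic_sub_Iic hg.integrableOn hg.integrableOn]
    abel
  have hleft := norm_setIntegral_Ioi_le_inv (g := fun t => g (-t)) hT fun t ht => by
    simpa using hbound (-t) (by rwa [abs_neg, abs_of_pos (hT.trans ht)])
  have hright := norm_setIntegral_Ioi_le_inv hT fun t ht =>
    hbound t (by rwa [abs_of_pos (hT.trans ht)])
  rw [hsplit]
  calc _ ≤ T⁻¹ + T⁻¹ := (norm_add_le _ _).trans (add_le_add hleft hright)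
    _ = 2 / T := by ring

end Tail

noncomputable def rampExp (k u : ℝ) : ℂ := ((max u 0 : ℝ) : ℂ) * cexp (-(k * max u 0))

lemma continuous_rampExp (k : ℝ) : Continuous (rampExp k) := by
  unfold rampExp
  fun_prop

lemma rampExp_of_nonpos {k u : ℝ} (hu : u ≤ 0) : rampExp k u = 0 := by
  simp [rampExp, max_eq_right hu]

lemma rampExp_of_nonneg {k u : ℝ} (hu : 0 ≤ u) : rampExp k u = u * cexp (-(k * u)) := by
  simp [rampExp, max_eq_left hu]

lemma integrable_rampExp {k : ℝ} (hk : 0 < k) : Integrable (rampExp k) := by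
  refine IntegrableOn.integrable_of_forall_notMem_eq_zero ?_
    fun u hu => rampExp_of_nonpos (not_lt.mp hu)
  refine (integrableOn_Ioi_mul_cexp_neg_mul (c := k) (by simpa using hk)).congr_fun
    (fun u hu => (rampExp_of_nonneg (le_of_lt hu)).symm) measurableSet_Ioi

lemma fourier_rampExp {k : ℝ} (hk : 0 < k) (w : ℝ) :
    𝓕 (rampExp k) w = 1 / ((k : ℂ) + 2 * π * w * I) ^ 2 := by
  rw [Real.fourier_real_eq_integral_exp_smul, ← setIntegral_eq_integral_of_forall_compl_eq_zero
    fun u hu => by rw [rampExp_of_nonpos (not_lt.mp hu), smul_zero]]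
  rw [← integral_Ioi_mul_cexp_neg_mul (c := k + 2 * π * w * I) (by simpa using hk)]
  refine setIntegral_congr_fun measurableSet_Ioi fun u hu => ?_
  rw [rampExp_of_nonneg (le_of_lt hu), smul_eq_mul, mul_left_comm, ← Complex.exp_add]
  congr 2
  push_cast
  ring

lemma norm_ofReal_add_mul_I_sq (k t : ℝ) : ‖((k : ℂ) + t * I) ^ 2‖ = k ^ 2 + t ^ 2 := by
  rw [norm_pow, Complex.sq_norm, normSq_add_mul_I]

lemma integrable_inv_sq_add_sq {k : ℝ} (hk : k ≠ 0) :
    Integrable fun t : ℝ => (k ^ 2 + t ^ 2)⁻¹ := by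
  refine (integrable_inv_one_add_sq.comp_div hk).const_mul (k ^ 2)⁻¹ |>.congr ?_
  refine ae_of_all _ fun t => ?_
  field_simp

lemma integrable_fourier_rampExp {k : ℝ} (hk : 0 < k) : Integrable (𝓕 (rampExp k)) := by
  rw [funext (fourier_rampExp hk)]
  refine ((integrable_inv_sq_add_sq hk.ne').comp_mul_left' (by positivity : 2 * π ≠ 0)).mono'
    (Measurable.aestronglyMeasurable (by fun_prop)) (ae_of_all _ fun w => ?_)
  rw [show (k : ℂ) + 2 * π * w * I = k + ((2 * π * w : ℝ) : ℂ) * I by push_cast; ring,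
    norm_div, norm_one, norm_ofReal_add_mul_I_sq, one_div]

lemma integral_cexp_mul_I_div_sq {k : ℝ} (hk : 0 < k) (l : ℝ) :
    ∫ t : ℝ, cexp (↑(l * t) * I) / ((k : ℂ) + t * I) ^ 2 = 2 * π * rampExp k l := by
  set g : ℝ → ℂ := fun t => cexp (↑(l * t) * I) / ((k : ℂ) + t * I) ^ 2
  have hinv : ∫ w : ℝ, g (2 * π * w) = rampExp k l := by
    rw [← (integrable_rampExp hk).fourierInv_fourier_eq (integrable_fourier_rampExp hk)
      (continuous_rampExp k).continuousAt, Real.fourierInv_eq']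
    refine integral_congr_ae (ae_of_all _ fun w => ?_)
    simp only [g, fourier_rampExp hk, smul_eq_mul, RCLike.inner_apply, conj_trivial]
    push_cast
    ring_nf
  have hscale := Measure.integral_comp_mul_left g (2 * π)
  rw [hinv, abs_of_pos (by positivity)] at hscale
  rw [hscale, real_smul]
  push_cast
  field_simp

lemma ofReal_add_mul_I_ne_zero {k : ℝ} (hk : k ≠ 0) (t : ℝ) : (k : ℂ) + t * I ≠ 0 := by
  intro h
  simpa [hk] using congrArg re h

lemma norm_cexp_mul_I_div_sq (k l t : ℝ) :
    ‖cexp (↑(l * t) * I) / ((k : ℂ) + t * I) ^ 2‖ = (k ^ 2 + t ^ 2)⁻¹ := by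
  rw [norm_div, norm_exp_ofReal_mul_I, norm_ofReal_add_mul_I_sq, one_div]

lemma integrable_cexp_mul_I_div_sq {k : ℝ} (hk : k ≠ 0) (l : ℝ) :
    Integrable fun t : ℝ => cexp (↑(l * t) * I) / ((k : ℂ) + t * I) ^ 2 :=
  (integrable_inv_sq_add_sq hk).mono' (Measurable.aestronglyMeasurable (by fun_prop))
    (ae_of_all _ fun t => (norm_cexp_mul_I_div_sq k l t).le)

lemma intervalIntegral_cexp_mul_I_div_eq {k l : ℝ} (hk : k ≠ 0) (hl : l ≠ 0) (a b : ℝ) :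
    ∫ t in a..b, cexp (↑(l * t) * I) / ((k : ℂ) + t * I)
      = cexp (↑(l * b) * I) / (l * I * (k + b * I)) - cexp (↑(l * a) * I) / (l * I * (k + a * I))
        + 1 / l * ∫ t in a..b, cexp (↑(l * t) * I) / ((k : ℂ) + t * I) ^ 2 := by
  have hu (t : ℝ) : HasDerivAt (fun t : ℝ => ((k : ℂ) + t * I)⁻¹)
      (-I / ((k : ℂ) + t * I) ^ 2) t :=
    (((hasDerivAt_id t).ofReal_comp.mul_const I).const_add (k : ℂ)).fun_inv
      (ofReal_add_mul_I_ne_zero hk t) |>.congr_deriv (by simp)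
  have hv (t : ℝ) : HasDerivAt (fun t : ℝ => cexp (↑(l * t) * I) / (l * I))
      (cexp (↑(l * t) * I)) t :=
    (((hasDerivAt_id t).const_mul l).ofReal_comp.mul_const I).cexp.div_const (l * I)
      |>.congr_deriv (by simp [hl])
  have hu' : Continuous fun t : ℝ => -I / ((k : ℂ) + t * I) ^ 2 :=
    continuous_const.div (by fun_prop) fun t => pow_ne_zero 2 (ofReal_add_mul_I_ne_zero hk t)
  have hparts := intervalIntegral.integral_mul_deriv_eq_deriv_mul (a := a) (b := b)
    (fun t _ => hu t) (fun t _ => hv t) (hu'.intervalIntegrable a b)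
    ((by fun_prop : Continuous fun t : ℝ => cexp (↑(l * t) * I)).intervalIntegrable a b)
  simp only [← div_eq_inv_mul] at hparts
  rw [hparts, ← intervalIntegral.integral_const_mul, sub_eq_add_neg,
    ← intervalIntegral.integral_neg, div_div, div_div]
  congr 1
  refine intervalIntegral.integral_congr fun t _ => ?_
  field_simp [I_ne_zero]

lemma norm_cexp_mul_I_div_le {l t : ℝ} (hl : l ≠ 0) (ht : t ≠ 0) (k : ℝ) :
    ‖cexp (↑(l * t) * I) / (l * I * (k + t * I))‖ ≤ (|l| * |t|)⁻¹ := by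
  rw [norm_div, norm_exp_ofReal_mul_I, norm_mul, norm_mul, norm_I, mul_one, norm_real,
    Real.norm_eq_abs, one_div]
  gcongr
  simpa using abs_im_le_norm ((k : ℂ) + t * I)

lemma norm_intervalIntegral_cexp_mul_I_div_sub_le {k l T : ℝ} (hk : 0 < k) (hl : l ≠ 0)
    (hT : 0 < T) :
    ‖(∫ t in -T..T, cexp (↑(l * t) * I) / ((k : ℂ) + t * I)) - 2 * π / l * rampExp k l‖
      ≤ 4 / (|l| * T) := by
  set g : ℝ → ℂ := fun t => cexp (↑(l * t) * I) / ((k : ℂ) + t * I) ^ 2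
  have htail : ‖(∫ t, g t) - ∫ t in -T..T, g t‖ ≤ 2 / T :=
    norm_integral_sub_intervalIntegral_le (integrable_cexp_mul_I_div_sq hk.ne' l) hT
      fun t ht => (norm_cexp_mul_I_div_sq k l t).trans_le <|
        inv_anti₀ (by nlinarith [abs_nonneg t, sq_abs t]) (by nlinarith)
  set B : ℝ → ℂ := fun t => cexp (↑(l * t) * I) / (l * I * (k + t * I))
  have hB (t : ℝ) (ht : |t| = T) : ‖B t‖ ≤ (|l| * T)⁻¹ :=
    ht ▸ norm_cexp_mul_I_div_le hl (abs_pos.mp (ht ▸ hT)) k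
  have hsplit : (∫ t in -T..T, cexp (↑(l * t) * I) / ((k : ℂ) + t * I)) - 2 * π / l * rampExp k l
      = B T - B (-T) - 1 / l * ((∫ t, g t) - ∫ t in -T..T, g t) := by
    rw [intervalIntegral_cexp_mul_I_div_eq hk.ne' hl, integral_cexp_mul_I_div_sq hk l]
    ring
  rw [hsplit]
  calc _ ≤ ‖B T‖ + ‖B (-T)‖ + ‖1 / (l : ℂ)‖ * ‖(∫ t, g t) - ∫ t in -T..T, g t‖ := by
        grw [norm_sub_le, norm_sub_le, norm_mul]
    _ ≤ (|l| * T)⁻¹ + (|l| * T)⁻¹ + |l|⁻¹ * (2 / T) := by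
        rw [one_div, norm_inv, norm_real, Real.norm_eq_abs]
        gcongr
        exacts [hB T (abs_of_pos hT), hB (-T) (by rw [abs_neg, abs_of_pos hT])]
    _ = 4 / (|l| * T) := by ring

lemma ofReal_cpow_add_mul_I {y : ℝ} (hy : 0 < y) (k t : ℝ) :
    (y : ℂ) ^ ((k : ℂ) + t * I) = ((y ^ k : ℝ) : ℂ) * cexp (↑(Real.log y * t) * I) := by
  rw [cpow_def_of_ne_zero (by exact_mod_cast hy.ne'), ← ofReal_log hy.le, rpow_def_of_pos hy,
    ofReal_exp, ← Complex.exp_add]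
  push_cast
  ring_nf

lemma hFun_eq_rpow_mul_rampExp_log {y : ℝ} (hy : 0 < y) (hy1 : y ≠ 1) (k : ℝ) :
    hFun y = ((y ^ k : ℝ) : ℂ) * (rampExp k (Real.log y) / Real.log y) := by
  rcases lt_or_gt_of_ne hy1 with hy1 | hy1
  · simp [hFun, hy1, rampExp_of_nonpos (Real.log_neg hy hy1).le]
  · have hl : (Real.log y : ℂ) ≠ 0 := by exact_mod_cast (Real.log_pos hy1).ne'
    rw [hFun, if_neg hy1.not_gt, rampExp_of_nonneg (Real.log_pos hy1).le, rpow_def_of_pos hy,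
      ofReal_exp, mul_div_right_comm, div_self hl, one_mul, ← Complex.exp_add]
    push_cast
    ring_nf
    exact Complex.exp_zero.symm

theorem stmt4 : ∃ C : ℝ, ∀ y k T : ℝ, 0 < y → y ≠ 1 → 1 < k → 0 < T →
    ‖(1 / (2 * Real.pi * Complex.I)) *
        (∫ t in (-T)..T,
          (y : ℂ) ^ ((k : ℂ) + t * Complex.I) / ((k : ℂ) + t * Complex.I) * Complex.I) -
      hFun y‖ ≤ C * y ^ k / (T * |Real.log y|) := by
  refine ⟨2 / π, fun y k T hy hy1 hk hT => ?_⟩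
  have hl : Real.log y ≠ 0 := Real.log_ne_zero_of_pos_of_ne_one hy hy1
  set A := ∫ t in -T..T, cexp (↑(Real.log y * t) * I) / ((k : ℂ) + t * I)
  have hintegral : (∫ t in -T..T, (y : ℂ) ^ ((k : ℂ) + t * I) / ((k : ℂ) + t * I) * I)
      = ((y ^ k : ℝ) : ℂ) * I * A := by
    rw [← intervalIntegral.integral_const_mul]
    refine intervalIntegral.integral_congr fun t _ => ?_
    rw [ofReal_cpow_add_mul_I hy]
    ring
  have hdiff : 1 / (2 * (π : ℂ) * I) * (((y ^ k : ℝ) : ℂ) * I * A) - hFun y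
      = ((y ^ k / (2 * π) : ℝ) : ℂ) * (A - 2 * π / Real.log y * rampExp k (Real.log y)) := by
    rw [hFun_eq_rpow_mul_rampExp_log hy hy1 k]
    push_cast
    field_simp [I_ne_zero]
  rw [hintegral, hdiff, norm_mul, norm_real, Real.norm_of_nonneg (by positivity)]
  calc _ ≤ y ^ k / (2 * π) * (4 / (|Real.log y| * T)) := by
        gcongr
        exact norm_intervalIntegral_cexp_mul_I_div_sub_le (by linarith) hl hT
    _ = 2 / π * y ^ k / (T * |Real.log y|) := by
        field_simp
        ring
end

section
/- There is an absolute constant C such that for all real x > 2 and T > 0, with k = 1 + 1/log x and N the nearest integer to x, Σ_{n=1}^∞ x^k / (T · n^k · |log(x/n)|) ≤ C·( x·log x / T + x/(T·|x − N|) ), where the sum omits the term n = x if x is an integer. -/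
/-!
Since `x ^ (1 / log x) = e`, the `n`-th term is `e x / (T n^k |log (x / n)|)`. If `n ≤ x / 2` or
`n ≥ 2x` then `|log (x / n)| ≥ log 2`, and these terms add up to at most
`e x ζ(k) / (T log 2)`, where `ζ(k) ≤ k / (k - 1) = 1 + log x` by comparison with `∫₁^∞ t^(-k) dt`.
If `x / 2 < n < 2x` then `n^k ≥ x / 2` and `|log (x / n)| ≥ |x - n| / (2x)`, so the term is at most
`4 e x / (T |x - n|)`. The term `n = N` gives `x / (T |x - N|)`; for `n ≠ N` we have
`|x - n| ≥ |n - N| / 2` because `|x - N| ≤ 1 / 2`, so the remaining terms form a harmonic sum of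
length `O(x)`, which is `O(log x)`.
-/

open Real Finset

theorem rpow_one_add_inv_log {x : ℝ} (hx0 : 0 < x) (hx1 : x ≠ 1) :
    x ^ (1 + 1 / log x) = exp 1 * x := by
  rw [rpow_add hx0, rpow_one, one_div, rpow_inv_log hx0 hx1, mul_comm]

theorem sub_div_le_log_div {x y : ℝ} (hy : 0 < y) (hyx : y ≤ x) : (x - y) / x ≤ log (x / y) := by
  have h := one_sub_inv_le_log_of_pos (div_pos (hy.trans_le hyx) hy)
  rwa [inv_div, one_sub_div (hy.trans_le hyx).ne'] at h

theorem abs_log_div_comm (x y : ℝ) : |log (x / y)| = |log (y / x)| := by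
  rw [← abs_neg, ← log_inv, inv_div]

theorem abs_sub_div_max_le_abs_log_div {x y : ℝ} (hx : 0 < x) (hy : 0 < y) :
    |x - y| / max x y ≤ |log (x / y)| := by
  rcases le_total y x with h | h
  · rw [abs_of_nonneg (sub_nonneg.2 h), max_eq_left h]
    exact (sub_div_le_log_div hy h).trans (le_abs_self _)
  · rw [abs_sub_comm, abs_of_nonneg (sub_nonneg.2 h), max_eq_right h, abs_log_div_comm]
    exact (sub_div_le_log_div hx h).trans (le_abs_self _)

theorem log_two_le_abs_log_div {x y : ℝ} (hx : 0 < x) (hy : 0 < y) (h : 2 * y ≤ x ∨ 2 * x ≤ y) :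
    log 2 ≤ |log (x / y)| := by
  rcases h with h | h
  · exact (log_le_log two_pos ((le_div_iff₀ hy).2 h)).trans (le_abs_self _)
  · rw [abs_log_div_comm]
    exact (log_le_log two_pos ((le_div_iff₀ hx).2 h)).trans (le_abs_self _)

theorem inv_rpow_mul_abs_log_div_le {x y k : ℝ} (hx : 0 < x) (hy : 1 ≤ y) (hk : 1 ≤ k) :
    (y ^ k * |log (x / y)|)⁻¹ ≤ y ^ (-k) / log 2 + 4 * if y < 2 * x then |x - y|⁻¹ else 0 := by
  have hy0 : 0 < y := by linarith
  have hfar_nonneg : 0 ≤ y ^ (-k) / log 2 := by positivity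
  by_cases hfar : 2 * y ≤ x ∨ 2 * x ≤ y
  · have hnear_nonneg : 0 ≤ 4 * if y < 2 * x then |x - y|⁻¹ else 0 := by
      split_ifs <;> positivity
    suffices (y ^ k * |log (x / y)|)⁻¹ ≤ y ^ (-k) / log 2 by linarith
    calc (y ^ k * |log (x / y)|)⁻¹ ≤ (y ^ k * log 2)⁻¹ :=
          inv_anti₀ (by positivity)
            (mul_le_mul_of_nonneg_left (log_two_le_abs_log_div hx hy0 hfar) (by positivity))
      _ = y ^ (-k) / log 2 := by rw [rpow_neg hy0.le, mul_inv, div_eq_mul_inv]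
  push Not at hfar
  obtain ⟨hxy, hyx⟩ := hfar
  rw [if_pos hyx]
  rcases eq_or_ne x y with rfl | hne
  · simp only [div_self hx.ne', log_one, abs_zero, mul_zero, inv_zero, sub_self]
    linarith
  have hden : |x - y| / 4 ≤ y ^ k * |log (x / y)| :=
    calc |x - y| / 4 = x / 2 * (|x - y| / (2 * x)) := by field_simp; ring
      _ ≤ y ^ k * (|x - y| / max x y) := by
        gcongr
        · linarith [self_le_rpow_of_one_le hy hk]
        · exact max_le (by linarith) hyx.le
      _ ≤ y ^ k * |log (x / y)| := by gcongr; exact abs_sub_div_max_le_abs_log_div hx hy0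
  calc (y ^ k * |log (x / y)|)⁻¹ ≤ (|x - y| / 4)⁻¹ :=
        inv_anti₀ (div_pos (abs_pos.2 (sub_ne_zero.2 hne)) four_pos) hden
    _ = 4 * |x - y|⁻¹ := by rw [inv_div, div_eq_mul_inv]
    _ ≤ _ := by linarith

-- The `n = 0` term is `0 ^ (-s) = 0`.
theorem tsum_nat_rpow_neg_le {s : ℝ} (hs : 1 < s) : ∑' n : ℕ, (n : ℝ) ^ (-s) ≤ s / (s - 1) := by
  have hsum : Summable fun n : ℕ => (n : ℝ) ^ (-s) := summable_nat_rpow.2 (by linarith)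
  have htail : ∑' n : ℕ, ((n + 1 + 1 : ℕ) : ℝ) ^ (-s) ≤ 1 / (s - 1) := by
    have h := AntitoneOn.tsum_comp_add_le_integral (f := fun t : ℝ => t ^ (-s)) 1
      ((antitoneOn_rpow_Ioi_of_exponent_nonpos (by linarith)).mono
        (by norm_num [Set.Ici_subset_Ioi]))
      (integrableOn_Ioi_rpow_of_lt (by linarith) (by norm_num))
      (fun t ht => rpow_nonneg (by simp at ht; linarith) _)
    rw [integral_Ioi_rpow_of_lt (by linarith) (by norm_num)] at h
    convert h using 1
    rw [Nat.cast_one, one_rpow, div_eq_div_iff (ne_of_gt (by linarith)) (ne_of_lt (by linarith))]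
    ring
  rw [hsum.tsum_eq_zero_add, (summable_nat_add_iff 1).2 hsum |>.tsum_eq_zero_add]
  have hs0 : (0 : ℝ) ^ (-s) = 0 := zero_rpow (by linarith)
  have : s / (s - 1) = 1 + 1 / (s - 1) := by
    have : s - 1 ≠ 0 := by linarith
    field_simp; ring
  simp only [Nat.cast_zero, hs0, zero_add, Nat.cast_one, one_rpow, this]
  simpa [add_assoc] using htail

theorem inv_abs_le_two_mul_inv_succ {y : ℝ} {j : ℕ} (h : j + 1 / 2 ≤ |y|) :
    |y|⁻¹ ≤ 2 * ((j : ℝ) + 1)⁻¹ := by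
  calc |y|⁻¹ ≤ (((j : ℝ) + 1) / 2)⁻¹ := inv_anti₀ (by positivity) (by linarith)
    _ = 2 * ((j : ℝ) + 1)⁻¹ := by rw [inv_div, div_eq_mul_inv]

theorem sum_range_inv_abs_sub_le {x : ℝ} {N M : ℕ} (hN : |x - N| ≤ 1 / 2) (hNM : N < M) :
    ∑ n ∈ range M, |x - n|⁻¹ ≤ |x - N|⁻¹ + 4 * harmonic M := by
  obtain ⟨hNx, hxN⟩ := abs_le.1 hN
  have hharmonic : ∀ K ≤ M, ∑ j ∈ range K, 2 * ((j : ℝ) + 1)⁻¹ ≤ 2 * harmonic M := by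
    intro K hK
    calc ∑ j ∈ range K, 2 * ((j : ℝ) + 1)⁻¹ ≤ ∑ j ∈ range M, 2 * ((j : ℝ) + 1)⁻¹ :=
          sum_le_sum_of_subset_of_nonneg (range_mono hK) fun _ _ _ => by positivity
      _ = 2 * harmonic M := by simp [harmonic, mul_sum]
  have hbelow : ∑ n ∈ range N, |x - n|⁻¹ ≤ 2 * harmonic M := by
    rw [← sum_range_reflect]
    refine (sum_le_sum fun j hj => inv_abs_le_two_mul_inv_succ ?_).trans (hharmonic N hNM.le)
    have hj : j < N := mem_range.1 hj
    rw [Nat.cast_sub (by omega), Nat.cast_sub (by omega)]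
    push_cast
    exact le_abs.2 (Or.inl (by linarith))
  have habove : ∑ n ∈ Ico (N + 1) M, |x - n|⁻¹ ≤ 2 * harmonic M := by
    rw [sum_Ico_eq_sum_range]
    refine (sum_le_sum fun j _ => inv_abs_le_two_mul_inv_succ ?_).trans (hharmonic _ (by omega))
    push_cast
    exact le_abs.2 (Or.inr (by linarith))
  rw [← sum_range_add_sum_Ico _ hNM.le, sum_eq_sum_Ico_succ_bot hNM]
  linarith

theorem harmonic_ceil_two_mul_le {x : ℝ} (hx : 2 < x) : (harmonic ⌈2 * x⌉₊ : ℝ) ≤ 5 * log x := by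
  have hM : (⌈2 * x⌉₊ : ℝ) ≤ 3 * x := by linarith [Nat.ceil_lt_add_one (by linarith : 0 ≤ 2 * x)]
  have hM0 : (0 : ℝ) < ⌈2 * x⌉₊ := by positivity
  have hlog3 : log 3 ≤ 2 * log 2 := by
    rw [← log_rpow two_pos]
    exact log_le_log three_pos (by norm_num)
  have hlog2 : log 2 < log x := log_lt_log two_pos hx
  calc (harmonic ⌈2 * x⌉₊ : ℝ) ≤ 1 + log ⌈2 * x⌉₊ := harmonic_le_one_add_log _
    _ ≤ 1 + log (3 * x) := by gcongr
    _ = 1 + log 3 + log x := by rw [log_mul three_pos.ne' (by positivity)]; ring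
    _ ≤ 5 * log x := by linarith [log_two_gt_d9]

theorem tsum_pnat_eq_tsum_nat_of_apply_zero {M : Type*} [AddCommMonoid M] [TopologicalSpace M]
    {f : ℕ → M} (hf : f 0 = 0) : ∑' n : ℕ+, f n = ∑' n : ℕ, f n := by
  refine PNat.coe_injective.tsum_eq fun n hn => ⟨⟨n, Nat.pos_of_ne_zero ?_⟩, rfl⟩
  rintro rfl
  exact hn hf

theorem tsum_inv_rpow_mul_abs_log_div_le {x k : ℝ} (hx : 0 < x) (hk : 1 < k) :
    ∑' n : ℕ, ((n : ℝ) ^ k * |log (x / n)|)⁻¹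
      ≤ k / (k - 1) / log 2 + 4 * ∑ n ∈ range ⌈2 * x⌉₊, |x - n|⁻¹ := by
  set M := ⌈2 * x⌉₊
  set near : ℕ → ℝ := fun n => if n < M then |x - n|⁻¹ else 0
  have hbound : ∀ n : ℕ, ((n : ℝ) ^ k * |log (x / n)|)⁻¹ ≤ (n : ℝ) ^ (-k) / log 2 + 4 * near n := by
    intro n
    rcases n.eq_zero_or_pos with rfl | hn
    · have : 0 ≤ near 0 := by simp only [near]; split_ifs <;> positivity
      simp only [Nat.cast_zero, zero_rpow (by linarith : k ≠ 0), zero_mul, inv_zero]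
      positivity
    · simpa only [near, M, Nat.lt_ceil] using
        inv_rpow_mul_abs_log_div_le hx (Nat.one_le_cast.2 hn) hk.le
  have hnear : ∑' n, near n = ∑ n ∈ range M, |x - n|⁻¹ := by
    rw [tsum_eq_sum (s := range M) fun n hn => if_neg (by simpa using hn)]
    exact sum_congr rfl fun n hn => if_pos (mem_range.1 hn)
  have hzeta : Summable fun n : ℕ => (n : ℝ) ^ (-k) := summable_nat_rpow.2 (by linarith)
  have hnear_summable : Summable near := summable_of_ne_finset_zero (s := range M)
    fun n hn => if_neg (by simpa using hn)
  have hsum := (hzeta.div_const (log 2)).add (hnear_summable.mul_left 4)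
  calc ∑' n : ℕ, ((n : ℝ) ^ k * |log (x / n)|)⁻¹
      ≤ ∑' n : ℕ, ((n : ℝ) ^ (-k) / log 2 + 4 * near n) :=
        (hsum.of_nonneg_of_le (fun _ => by positivity) hbound).tsum_le_tsum hbound hsum
    _ = (∑' n : ℕ, (n : ℝ) ^ (-k)) / log 2 + 4 * ∑ n ∈ range M, |x - n|⁻¹ := by
        rw [hzeta.div_const _ |>.tsum_add (hnear_summable.mul_left 4), tsum_div_const,
          tsum_mul_left, hnear]
    _ ≤ k / (k - 1) / log 2 + 4 * ∑ n ∈ range M, |x - n|⁻¹ := by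
        gcongr
        exact tsum_nat_rpow_neg_le hk

theorem tsum_inv_rpow_one_add_inv_log_mul_abs_log_div_le {x : ℝ} {N : ℕ} (hx : 2 < x)
    (hN : |x - N| ≤ 1 / 2) :
    ∑' n : ℕ, ((n : ℝ) ^ (1 + 1 / log x) * |log (x / n)|)⁻¹ ≤ 86 * log x + 4 * |x - N|⁻¹ := by
  have hlog2 : 0 < log 2 := log_pos one_lt_two
  have hL : log 2 < log x := log_lt_log two_pos hx
  have hk : 1 < 1 + 1 / log x := by linarith [one_div_pos.2 (hlog2.trans hL)]
  have hk' : (1 + 1 / log x) / (1 + 1 / log x - 1) = 1 + log x := by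
    have : log x ≠ 0 := by linarith
    field_simp
    ring
  have hone : (1 + log x) / log 2 ≤ 6 * log x := by
    rw [div_le_iff₀ hlog2]
    nlinarith [log_two_gt_d9]
  have hNM : N < ⌈2 * x⌉₊ := Nat.lt_ceil.2 (by linarith [abs_le.1 hN])
  refine (tsum_inv_rpow_mul_abs_log_div_le (by linarith) hk).trans ?_
  rw [hk']
  linarith [sum_range_inv_abs_sub_le hN hNM, harmonic_ceil_two_mul_le hx]

theorem stmt6 : ∃ C : ℝ, ∀ x T : ℝ, 2 < x → (¬ ∃ m : ℤ, x = m) → 0 < T →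
    ∑' n : ℕ+,
        x ^ (1 + 1 / Real.log x) /
          (T * (n : ℝ) ^ (1 + 1 / Real.log x) * |Real.log (x / (n : ℝ))|)
      ≤ C * (x * Real.log x / T + x / (T * |x - (round x : ℝ)|)) := by
  refine ⟨300, fun x T hx _ hT => ?_⟩
  have hx0 : 0 < x := by linarith
  have hround := abs_sub_round x
  obtain ⟨N, hN⟩ : ∃ N : ℕ, round x = N :=
    Int.eq_ofNat_of_zero_le (by exact_mod_cast (by linarith [abs_le.1 hround] : (0 : ℝ) ≤ round x))
  rw [hN, Int.cast_natCast] at hround ⊢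
  set k := 1 + 1 / log x
  have hterm : ∀ n : ℕ, x ^ k / (T * (n : ℝ) ^ k * |log (x / n)|)
      = exp 1 * x / T * ((n : ℝ) ^ k * |log (x / n)|)⁻¹ := fun n => by
    rw [rpow_one_add_inv_log hx0 (by linarith)]
    ring
  have hk0 : k ≠ 0 := by
    have := log_pos (by linarith : 1 < x)
    positivity
  rw [tsum_congr fun n : ℕ+ => hterm n, tsum_mul_left,
    tsum_pnat_eq_tsum_nat_of_apply_zero (f := fun n : ℕ => ((n : ℝ) ^ k * |log (x / n)|)⁻¹)
      (by simp [zero_rpow hk0])]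
  have hsum := tsum_inv_rpow_one_add_inv_log_mul_abs_log_div_le hx hround
  have hxT : 0 < x / T := div_pos hx0 hT
  calc exp 1 * x / T * ∑' n : ℕ, ((n : ℝ) ^ k * |log (x / n)|)⁻¹
      ≤ 3 * (x / T) * (86 * log x + 4 * |x - N|⁻¹) := by
        rw [mul_div_assoc]
        gcongr
        linarith [exp_one_lt_d9]
    _ ≤ 300 * (x * log x / T + x / (T * |x - N|)) := by
        rw [mul_div_right_comm, div_mul_eq_div_div, div_eq_mul_inv (x / T)]
        nlinarith [mul_pos hxT (log_pos (by linarith : 1 < x)),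
          mul_nonneg hxT.le (inv_nonneg.2 (abs_nonneg (x - N)))]
end
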